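/- For every n ≥ 1, the n×n symmetric Pascal matrix mod 2, with (i,j) entry equal to C(i+j,i) mod 2 viewed in ℤ, has determinant (−1)^{T(n)} where T(n) = #{0 ≤ i < n : i has an odd number of 1's in binary}; in particular its determinant is ±1. -/

import Mathlib

def P (i j : ℕ) : ℤ := if Odd (Nat.choose (i + j) i) then 1 else 0

open Matrix

/-!
By Lucas' theorem, `P (2a + r) (2b + s) = P a b` for `r, s ∈ {0, 1}`, except that
`P (2a + 1) (2b + 1) = 0`. Listing the even indices before the odd ones therefore turns the
matrix `P_n` into `[[P_⌈n/2⌉, B], [C, 0]]`, where `B` consists of the first `⌊n/2⌋` columns of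
`P_⌈n/2⌉` and `C` of its first `⌊n/2⌋` rows. Subtracting those columns clears `B` and leaves
`-P_⌊n/2⌋` in the corner, so `det P_n = det P_⌈n/2⌉ · (-1)^⌊n/2⌋ · det P_⌊n/2⌋`. The odious
count `T` satisfies the same recursion modulo 2, because `T (2m) = m` and `T (2m + 1) = m + t m`
with `t` the Thue–Morse sequence.
-/

theorem Nat.odd_choose_iff (n k : ℕ) :
    Odd (n.choose k) ↔ Odd ((n % 2).choose (k % 2)) ∧ Odd ((n / 2).choose (k / 2)) := by
  rw [← Nat.odd_mul, Nat.odd_iff, Nat.odd_iff]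
  exact Iff.of_eq (congrArg (· = 1) (Choose.choose_modEq_choose_mod_mul_choose_div_nat (p := 2)))

theorem P_two_mul_two_mul (a b : ℕ) : P (2 * a) (2 * b) = P a b := by
  simp only [P]
  congr 1
  rw [Nat.odd_choose_iff, ← mul_add]
  simp

theorem P_two_mul_two_mul_add_one (a b : ℕ) : P (2 * a) (2 * b + 1) = P a b := by
  simp only [P]
  congr 1
  rw [Nat.odd_choose_iff, ← add_assoc, ← mul_add]
  simp [Nat.mul_add_div]

theorem P_two_mul_add_one_two_mul (a b : ℕ) : P (2 * a + 1) (2 * b) = P a b := by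
  simp only [P]
  congr 1
  rw [Nat.odd_choose_iff, add_right_comm, ← mul_add]
  simp [Nat.mul_add_div]

theorem P_two_mul_add_one_two_mul_add_one (a b : ℕ) : P (2 * a + 1) (2 * b + 1) = 0 := by
  rw [P, if_neg]
  rw [Nat.odd_choose_iff, show 2 * a + 1 + (2 * b + 1) = 2 * (a + b + 1) by ring]
  simp

theorem Matrix.det_fromBlocks_submatrix_id_zero {m n R : Type*} [Fintype m] [DecidableEq m]
    [Fintype n] [DecidableEq n] [CommRing R] (A : Matrix m m R) (C : Matrix n m R) (f : n → m) :
    (fromBlocks A (A.submatrix id f) C 0).det = A.det * (-C.submatrix id f).det := by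
  set J : Matrix m n R := (1 : Matrix m m R).submatrix id f
  have hA : A * J = A.submatrix id f := mul_submatrix_one (Equiv.refl m) f A
  have hC : C * J = C.submatrix id f := mul_submatrix_one (Equiv.refl m) f C
  have clear_B : fromBlocks A (A.submatrix id f) C 0 * fromBlocks 1 (-J) 0 1 =
      fromBlocks A 0 C (-C.submatrix id f) := by
    simp [fromBlocks_multiply, hA, hC]
  have det_unipotent : (fromBlocks (1 : Matrix m m R) (-J) 0 (1 : Matrix n n R)).det = 1 := by
    simp
  rw [← mul_one (det _), ← det_unipotent, ← det_mul, clear_B, det_fromBlocks_zero₁₂]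

noncomputable def finEvenOddEquiv (n : ℕ) : Fin ((n + 1) / 2) ⊕ Fin (n / 2) ≃ Fin n :=
  Equiv.ofBijective (Sum.elim (fun a => ⟨2 * a, by omega⟩) (fun b => ⟨2 * b + 1, by omega⟩)) <| by
    rw [Fintype.bijective_iff_injective_and_card]
    refine ⟨?_, by simp; omega⟩
    rintro (a | a) (b | b) h <;> simp [Fin.ext_iff] at h ⊢ <;> omega

def pascalMod2 (n : ℕ) : Matrix (Fin n) (Fin n) ℤ := of fun i j => P i j

theorem pascalMod2_submatrix_finEvenOddEquiv (n : ℕ) :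
    (pascalMod2 n).submatrix (finEvenOddEquiv n) (finEvenOddEquiv n) =
      fromBlocks (pascalMod2 ((n + 1) / 2))
        ((pascalMod2 ((n + 1) / 2)).submatrix id (Fin.castLE (by omega)))
        (of fun (i : Fin (n / 2)) (j : Fin ((n + 1) / 2)) => P i j) 0 := by
  ext (i | i) (j | j) <;>
    simp [pascalMod2, finEvenOddEquiv, P_two_mul_two_mul, P_two_mul_two_mul_add_one,
      P_two_mul_add_one_two_mul, P_two_mul_add_one_two_mul_add_one]

theorem det_pascalMod2_eq (n : ℕ) :
    (pascalMod2 n).det =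
      (pascalMod2 ((n + 1) / 2)).det * (-1) ^ (n / 2) * (pascalMod2 (n / 2)).det := by
  rw [← det_submatrix_equiv_self (finEvenOddEquiv n), pascalMod2_submatrix_finEvenOddEquiv,
    det_fromBlocks_submatrix_id_zero, det_neg, Fintype.card_fin, mul_assoc]
  rfl

def odiousCount (n : ℕ) : ℕ := ((Finset.range n).filter (fun i => Odd (Nat.digits 2 i).sum)).card

theorem odd_digits_sum_two_mul (m : ℕ) :
    Odd (Nat.digits 2 (2 * m)).sum ↔ Odd (Nat.digits 2 m).sum := by
  rcases m.eq_zero_or_pos with rfl | hm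
  · rfl
  · simp [Nat.digits_def' one_lt_two (by omega : 0 < 2 * m)]

theorem odd_digits_sum_two_mul_add_one (m : ℕ) :
    Odd (Nat.digits 2 (2 * m + 1)).sum ↔ ¬Odd (Nat.digits 2 m).sum := by
  simp [Nat.odd_add, Nat.mul_add_div, Nat.not_odd_iff_even]

theorem odiousCount_succ (k : ℕ) :
    odiousCount (k + 1) = odiousCount k + if Odd (Nat.digits 2 k).sum then 1 else 0 := by
  simp only [odiousCount, Finset.range_add_one, Finset.filter_insert]
  split_ifs
  · exact Finset.card_insert_of_notMem (by simp)
  · rfl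

theorem odiousCount_two_mul (m : ℕ) : odiousCount (2 * m) = m := by
  induction m with
  | zero => rfl
  | succ m ih =>
    rw [show 2 * (m + 1) = 2 * m + 1 + 1 by ring, odiousCount_succ, odiousCount_succ, ih]
    simp only [odd_digits_sum_two_mul, odd_digits_sum_two_mul_add_one]
    split_ifs <;> omega

theorem odiousCount_two_mul_add_one (m : ℕ) :
    odiousCount (2 * m + 1) = m + if Odd (Nat.digits 2 m).sum then 1 else 0 := by
  rw [odiousCount_succ, odiousCount_two_mul]
  simp only [odd_digits_sum_two_mul]

theorem even_odiousCount_iff (n : ℕ) :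
    Even (odiousCount ((n + 1) / 2) + n / 2 + odiousCount (n / 2)) ↔ Even (odiousCount n) := by
  obtain ⟨m, rfl | rfl⟩ := n.even_or_odd'
  · rw [show (2 * m + 1) / 2 = m by omega, show 2 * m / 2 = m by omega, odiousCount_two_mul]
    simp only [Nat.even_add]
    tauto
  · rw [show (2 * m + 1 + 1) / 2 = m + 1 by omega, show (2 * m + 1) / 2 = m by omega,
      odiousCount_succ, odiousCount_two_mul_add_one]
    split_ifs <;> simp only [Nat.even_add, Nat.even_add_one] <;> tauto

theorem det_pascalMod2 (n : ℕ) : (pascalMod2 n).det = (-1) ^ odiousCount n := by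
  induction n using Nat.strong_induction_on with
  | _ n ih =>
    rcases lt_or_ge n 2 with hn | hn
    · interval_cases n <;> simp [pascalMod2, odiousCount, P, Finset.filter_singleton]
    · rw [det_pascalMod2_eq, ih _ (by omega), ih _ (by omega), ← pow_add, ← pow_add]
      exact neg_one_pow_congr (even_odiousCount_iff n)

theorem pascal_det_thue_morse_general (n : ℕ) :
    (Matrix.of fun i j : Fin n => P i j).det =
      (-1 : ℤ) ^ ((Finset.range n).filter
        (fun i => Odd (Nat.digits 2 i).sum)).card :=
  det_pascalMod2 n

theorem pascal_det_thue_morse (n : ℕ) (hn : 1 ≤ n) :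
    (Matrix.of fun i j : Fin n => P i j).det =
      (-1 : ℤ) ^ ((Finset.range n).filter
        (fun i => Odd (Nat.digits 2 i).sum)).card :=
  pascal_det_thue_morse_general n
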